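/- Let m ≥ 1, let U be a finite set, A_1, …, A_m ⊆ U, and wt : U → ℝ with wt(u) ≥ 0 for all u, and let f(T) = Σ_{u ∈ ∪_{i ∈ T} A_i} wt(u) for every T ⊆ [m]. Then for every nonempty S ⊆ [m], the W-coefficient of f at S equals the total weight of the elements whose incidence set is exactly S: w_f(S) = Σ_{u ∈ U : {i ∈ [m] : u ∈ A_i} = S} wt(u). -/

import Mathlib

/-!
The terms of the W-transform at `S` are indexed by `T = Sᶜ ∪ R` with `R ⊆ S`, carrying the sign
`-(-1)^|R|`, so everything reduces to `∑_{R ⊆ X} (-1)^|R| = [X = ∅]`. The function `f` is the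
`wt`-weighted sum over `u ∈ U` of the indicators `T ↦ [T meets I_u]` of the incidence sets
`I_u = {i | u ∈ A_i}`, and the W-transform is linear. Writing `[T meets I] = 1 - [T ⊆ Iᶜ]`, the W-transform kills constants
(as `S ≠ ∅`) and sends `[T ⊆ Iᶜ]` to `-[I = S]`, since `Sᶜ ∪ R ⊆ Iᶜ` iff `I ⊆ S` and `R ⊆ S \ I`.
-/

open Finset

/-- The W-transform: `Wcoef m f S = Σ_{T : S ∪ T = [m]} (−1)^{|S ∩ T| + 1} f(T)`. -/
noncomputable def Wcoef (m : ℕ) (f : Finset (Fin m) → ℝ) (S : Finset (Fin m)) : ℝ :=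
  ∑ T ∈ univ.filter (fun T : Finset (Fin m) => S ∪ T = univ),
    (-1 : ℝ) ^ ((S ∩ T).card + 1) * f T

theorem Finset.sum_powerset_neg_one_pow_card_eq_ite {α R : Type*} [DecidableEq α] [Ring R]
    (x : Finset α) : ∑ s ∈ x.powerset, (-1 : R) ^ #s = if x = ∅ then 1 else 0 := by
  exact_mod_cast congrArg (Int.cast : ℤ → R) (sum_powerset_neg_one_pow_card (x := x))

section Supersets

variable {α : Type*} [Fintype α] [DecidableEq α]

theorem Finset.union_eq_univ_iff_compl_subset {S T : Finset α} : S ∪ T = univ ↔ Sᶜ ⊆ T := by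
  simp [eq_univ_iff_forall, subset_iff, or_iff_not_imp_left]

theorem Finset.inter_compl_union_of_subset {S R : Finset α} (h : R ⊆ S) : S ∩ (Sᶜ ∪ R) = R := by
  rw [inter_union_distrib_left, inter_compl, empty_union, inter_eq_right.mpr h]

theorem Finset.sum_union_eq_univ_eq_sum_powerset {M : Type*} [AddCommMonoid M]
    (S : Finset α) (F : Finset α → M) :
    ∑ T ∈ univ.filter (fun T => S ∪ T = univ), F T = ∑ R ∈ S.powerset, F (Sᶜ ∪ R) := by
  have inv : ∀ T, S ∪ T = univ → Sᶜ ∪ (S ∩ T) = T := fun T hT => by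
    rw [union_eq_univ_iff_compl_subset] at hT
    rw [union_inter_distrib_left, union_comm Sᶜ S, union_compl, univ_inter, union_eq_right.mpr hT]
  refine sum_nbij' (S ∩ ·) (Sᶜ ∪ ·) ?_ ?_ ?_ ?_ ?_
  · simp
  · simp [union_eq_univ_iff_compl_subset]
  · intro T hT
    exact inv T (mem_filter.mp hT).2
  · exact fun R hR => inter_compl_union_of_subset (mem_powerset.mp hR)
  · exact fun T hT => by rw [inv T (mem_filter.mp hT).2]

end Supersets

section Wcoef

variable {m : ℕ}

theorem Wcoef_eq_neg_sum_powerset (f : Finset (Fin m) → ℝ) (S : Finset (Fin m)) :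
    Wcoef m f S = -∑ R ∈ S.powerset, (-1 : ℝ) ^ #R * f (Sᶜ ∪ R) := by
  rw [Wcoef, sum_union_eq_univ_eq_sum_powerset, ← sum_neg_distrib]
  refine sum_congr rfl fun R hR => ?_
  rw [inter_compl_union_of_subset (mem_powerset.mp hR), pow_succ]
  ring

theorem Wcoef_sum {ι : Type*} (s : Finset ι) (g : ι → Finset (Fin m) → ℝ) (S : Finset (Fin m)) :
    Wcoef m (fun T => ∑ u ∈ s, g u T) S = ∑ u ∈ s, Wcoef m (g u) S := by
  simp_rw [Wcoef, mul_sum]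
  exact sum_comm

theorem Wcoef_sub (f g : Finset (Fin m) → ℝ) (S : Finset (Fin m)) :
    Wcoef m (fun T => f T - g T) S = Wcoef m f S - Wcoef m g S := by
  simp_rw [Wcoef, mul_sub, sum_sub_distrib]

theorem Wcoef_const {S : Finset (Fin m)} (hS : S.Nonempty) (c : ℝ) :
    Wcoef m (fun _ => c) S = 0 := by
  rw [Wcoef_eq_neg_sum_powerset, ← sum_mul, sum_powerset_neg_one_pow_card_eq_ite,
    if_neg hS.ne_empty, zero_mul, neg_zero]

theorem Wcoef_indicator_disjoint (I S : Finset (Fin m)) (c : ℝ) :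
    Wcoef m (fun T => if Disjoint T I then c else 0) S = -(if I = S then c else 0) := by
  rw [Wcoef_eq_neg_sum_powerset, neg_inj]
  simp_rw [mul_ite, mul_zero, ← sum_filter, ← sum_mul]
  by_cases hIS : I ⊆ S
  · have hfilter : S.powerset.filter (fun R => Disjoint (Sᶜ ∪ R) I) = (S \ I).powerset := by
      ext R
      simp [subset_sdiff, disjoint_compl_left_iff, hIS]
    rw [hfilter, sum_powerset_neg_one_pow_card_eq_ite]
    have hcond : S \ I = ∅ ↔ I = S := by
      rw [sdiff_eq_empty_iff_subset, subset_antisymm_iff, and_iff_right hIS]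
    simp only [hcond, ite_mul, one_mul, zero_mul]
  · have hfilter : S.powerset.filter (fun R => Disjoint (Sᶜ ∪ R) I) = ∅ := by
      ext R
      simp [disjoint_compl_left_iff, hIS]
    rw [hfilter, if_neg (fun h => hIS h.subset)]
    simp

theorem Wcoef_indicator_not_disjoint {S : Finset (Fin m)} (hS : S.Nonempty) (I : Finset (Fin m))
    (c : ℝ) : Wcoef m (fun T => if Disjoint T I then 0 else c) S = if I = S then c else 0 := by
  have hsplit : (fun T => if Disjoint T I then 0 else c)
      = fun T => c - if Disjoint T I then c else 0 := by
    funext T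
    split_ifs <;> simp
  rw [hsplit, Wcoef_sub, Wcoef_const hS, Wcoef_indicator_disjoint, zero_sub, neg_neg]

end Wcoef

theorem Finset.sum_biUnion_eq_sum_ite_disjoint {ι U M : Type*} [Fintype ι] [DecidableEq ι]
    [Fintype U] [DecidableEq U] [AddCommMonoid M] (A : ι → Finset U) (T : Finset ι) (wt : U → M) :
    ∑ u ∈ T.biUnion A, wt u = ∑ u, if Disjoint T (univ.filter (u ∈ A ·)) then 0 else wt u := by
  have hbiUnion : T.biUnion A = univ.filter (fun u => ¬Disjoint T (univ.filter (u ∈ A ·))) := by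
    ext u
    simp [not_disjoint_iff]
  simp_rw [hbiUnion, sum_filter, ite_not]

theorem stmt3_general (m : ℕ) (U : Type) [Fintype U] [DecidableEq U]
    (A : Fin m → Finset U) (wt : U → ℝ)
    (f : Finset (Fin m) → ℝ) (hf : ∀ T : Finset (Fin m), f T = ∑ u ∈ T.biUnion A, wt u)
    (S : Finset (Fin m)) (hS : S.Nonempty) :
    Wcoef m f S
      = ∑ u ∈ univ.filter (fun u : U => univ.filter (fun i : Fin m => u ∈ A i) = S), wt u := by
  have hf' : f = fun T => ∑ u, if Disjoint T (univ.filter (u ∈ A ·)) then 0 else wt u := by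
    funext T
    rw [hf, sum_biUnion_eq_sum_ite_disjoint]
  rw [hf', Wcoef_sum, sum_filter]
  simp_rw [Wcoef_indicator_not_disjoint hS]

theorem stmt3 (m : ℕ) (hm : 1 ≤ m) (U : Type) [Fintype U] [DecidableEq U]
    (A : Fin m → Finset U) (wt : U → ℝ) (hwt : ∀ u, 0 ≤ wt u)
    (f : Finset (Fin m) → ℝ) (hf : ∀ T : Finset (Fin m), f T = ∑ u ∈ T.biUnion A, wt u)
    (S : Finset (Fin m)) (hS : S.Nonempty) :
    Wcoef m f S
      = ∑ u ∈ univ.filter (fun u : U => univ.filter (fun i : Fin m => u ∈ A i) = S), wt u :=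
  stmt3_general m U A wt f hf S hS
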